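/- arXiv:2307.12393 — 2 statements merged into one kernel-verified Lean document; each statement's English description precedes it below -/
import Mathlib

section
/- The subgraph of G induced by the set of vertices of coreness at least k equals the graph obtained from G by repeatedly deleting vertices of degree less than k until no such vertex remains. -/
open SimpleGraph

/-- The induced subgraph of `G` on vertex set `S` has minimum degree at least `k`:
every vertex of `S` has at least `k` neighbors within `S`. -/
def MinDegGE {V : Type*} (G : SimpleGraph V) (S : Set V) (k : ℕ) : Prop :=
  ∀ v ∈ S, k ≤ {w ∈ S | G.Adj v w}.ncard

/-- The coreness of a vertex `u`: the largest `k` such that `u` lies in an induced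
subgraph of `G` of minimum degree at least `k`. -/
noncomputable def coreness {V : Type*} (G : SimpleGraph V) (u : V) : ℕ :=
  sSup {k | ∃ S : Set V, u ∈ S ∧ MinDegGE G S k}

/-- `S` is a `k`-core of `G`: a maximal induced connected subgraph of `G` in which
every vertex has degree at least `k`. -/
def IsKCore {V : Type*} (G : SimpleGraph V) (k : ℕ) (S : Set V) : Prop :=
  MinDegGE G S k ∧ (G.induce S).Connected ∧
    ∀ T : Set V, MinDegGE G T k → (G.induce T).Connected → S ⊆ T → S = T

/-- `C` is a `k`-core of `G`, defined as (the vertex set of) a connected component of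
the subgraph of `G` induced by the vertices of coreness at least `k`. -/
def IsCoreComp {V : Type*} (G : SimpleGraph V) (k : ℕ) (C : Set V) : Prop :=
  ∃ c : (G.induce {v | k ≤ coreness G v}).ConnectedComponent,
    C = Subtype.val '' {x | (G.induce {v | k ≤ coreness G v}).connectedComponentMk x = c}

/-- One step of the iterative deletion process for threshold `k`: delete from the current
vertex set `S` some vertex whose degree in the induced subgraph on `S` is less than `k`. -/
def DelStep {V : Type*} (G : SimpleGraph V) (k : ℕ) (S T : Set V) : Prop :=
  ∃ u ∈ S, {w ∈ S | G.Adj u w}.ncard < k ∧ T = S \ {u}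


lemma coreness_bddAbove {V : Type*} [Fintype V] (G : SimpleGraph V) (u : V) :
    BddAbove {k | ∃ S : Set V, u ∈ S ∧ MinDegGE G S k} := by
  refine ⟨Fintype.card V, ?_⟩
  rintro k ⟨S, huS, hS⟩
  calc k ≤ {w ∈ S | G.Adj u w}.ncard := hS u huS
    _ ≤ (Set.univ : Set V).ncard := Set.ncard_le_ncard (Set.subset_univ _) Set.finite_univ
    _ = Fintype.card V := by simp [Set.ncard_univ, Nat.card_eq_fintype_card]

lemma le_coreness_of_minDeg {V : Type*} [Fintype V] (G : SimpleGraph V) {S : Set V} {k : ℕ}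
    (hS : MinDegGE G S k) {v : V} (hv : v ∈ S) : k ≤ coreness G v :=
  le_csSup (coreness_bddAbove G v) ⟨S, hv, hS⟩

lemma exists_core_set {V : Type*} [Fintype V] (G : SimpleGraph V) {k : ℕ} {v : V}
    (h : k ≤ coreness G v) : ∃ T : Set V, v ∈ T ∧ MinDegGE G T k := by
  have hne : ({k | ∃ S : Set V, v ∈ S ∧ MinDegGE G S k}).Nonempty :=
    ⟨0, {v}, rfl, fun w _ => Nat.zero_le _⟩
  obtain ⟨T, hvT, hT⟩ := Nat.sSup_mem hne (coreness_bddAbove G v)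
  exact ⟨T, hvT, fun w hw => le_trans h (hT w hw)⟩

lemma core_subset_invariant {V : Type*} [Fintype V] (G : SimpleGraph V) {k : ℕ} {T : Set V}
    (hT : MinDegGE G T k) {A B : Set V} (hreach : Relation.ReflTransGen (DelStep G k) A B)
    (hTA : T ⊆ A) : T ⊆ B := by
  induction hreach with
  | refl => exact hTA
  | tail _ hstep ih =>
    obtain ⟨u, huB, hdeg, rfl⟩ := hstep
    intro x hx
    refine ⟨ih hx, ?_⟩
    simp only [Set.mem_singleton_iff]
    rintro rfl
    have hsub : {w ∈ T | G.Adj x w} ⊆ {w ∈ _ | G.Adj x w} :=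
      fun w ⟨hw1, hw2⟩ => ⟨ih hw1, hw2⟩
    have := le_trans (hT x hx) (Set.ncard_le_ncard hsub (Set.toFinite _))
    omega

theorem coreness_set_eq_deletion_result {V : Type*} [Fintype V] (G : SimpleGraph V) (k : ℕ)
    (S : Set V) (hreach : Relation.ReflTransGen (DelStep G k) Set.univ S)
    (hterm : ∀ u ∈ S, k ≤ {w ∈ S | G.Adj u w}.ncard) :
    S = {v | k ≤ coreness G v} := by
  ext v
  constructor
  · intro hv
    exact le_coreness_of_minDeg G hterm hv
  · intro hv
    obtain ⟨T, hvT, hT⟩ := exists_core_set G hv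
    exact core_subset_invariant G hT hreach (Set.subset_univ T) hvT
end

section
/- Deleting a vertex of degree less than k from G does not change the set of vertices of coreness at least k: a vertex v ≠ u has coreness at least k in G if and only if it has coreness at least k in G − u, where deg_G(u) < k. -/
open SimpleGraph

lemma le_coreness_iff {V : Type*} [Fintype V] (G : SimpleGraph V) (v : V) (k : ℕ) :
    k ≤ coreness G v ↔ ∃ S : Set V, v ∈ S ∧ MinDegGE G S k := by
  have hbdd : BddAbove {k | ∃ S : Set V, v ∈ S ∧ MinDegGE G S k} := by
    refine ⟨Fintype.card V, fun m hm => ?_⟩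
    obtain ⟨S, hvS, hS⟩ := hm
    refine (hS v hvS).trans ?_
    calc {w | w ∈ S ∧ G.Adj v w}.ncard ≤ (Set.univ : Set V).ncard :=
          Set.ncard_le_ncard (Set.subset_univ _) Set.finite_univ
      _ = Fintype.card V := by simp [Set.ncard_univ]
  constructor
  · intro h
    have hne : {k | ∃ S : Set V, v ∈ S ∧ MinDegGE G S k}.Nonempty :=
      ⟨0, Set.univ, Set.mem_univ v, fun w _ => Nat.zero_le _⟩
    have hmem := Nat.sSup_mem hne hbdd
    obtain ⟨S, hvS, hS⟩ := hmem
    exact ⟨S, hvS, fun w hw => le_trans h (hS w hw)⟩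
  · intro ⟨S, hvS, hS⟩
    exact le_csSup hbdd ⟨S, hvS, hS⟩

theorem delete_low_degree_vertex_preserves_coreness {V : Type*} [Fintype V] [DecidableEq V]
    (G : SimpleGraph V) (k : ℕ) (hk : 1 ≤ k) (u : V)
    (hu : {w : V | G.Adj u w}.ncard < k) (v : V) (hv : v ≠ u) :
    k ≤ coreness G v ↔ k ≤ coreness (G.induce {w : V | w ≠ u}) ⟨v, hv⟩ := by
  rw [le_coreness_iff, le_coreness_iff]
  constructor
  · rintro ⟨S, hvS, hS⟩
    have huS : u ∉ S := by
      intro huS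
      have h1 := hS u huS
      have h2 : {w | w ∈ S ∧ G.Adj u w}.ncard ≤ {w : V | G.Adj u w}.ncard :=
        Set.ncard_le_ncard (fun w hw => hw.2) (Set.toFinite _)
      omega
    refine ⟨{x | x.val ∈ S}, hvS, ?_⟩
    intro x hx
    have himg : {w | w ∈ S ∧ G.Adj x.val w} =
        Subtype.val '' {y : {w : V | w ≠ u} | y ∈ {x : {w : V | w ≠ u} | x.val ∈ S} ∧
          (G.induce {w : V | w ≠ u}).Adj x y} := by
      ext w
      simp only [Set.mem_setOf_eq, Set.mem_image, comap_adj, Function.Embedding.coe_subtype]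
      constructor
      · rintro ⟨hwS, hadj⟩
        exact ⟨⟨w, fun h => huS (h ▸ hwS)⟩, ⟨hwS, hadj⟩, rfl⟩
      · rintro ⟨y, ⟨hyS, hadj⟩, rfl⟩
        exact ⟨hyS, hadj⟩
    have := hS x.val hx
    rwa [himg, Set.ncard_image_of_injective _ Subtype.val_injective] at this
  · rintro ⟨S, hvS, hS⟩
    refine ⟨Subtype.val '' S, ⟨⟨v, hv⟩, hvS, rfl⟩, ?_⟩
    rintro w ⟨y, hyS, rfl⟩
    have himg : {z | z ∈ Subtype.val '' S ∧ G.Adj y.val z} =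
        Subtype.val '' {z : {w : V | w ≠ u} | z ∈ S ∧ (G.induce {w : V | w ≠ u}).Adj y z} := by
      ext z
      simp only [Set.mem_setOf_eq, Set.mem_image, comap_adj, Function.Embedding.coe_subtype]
      constructor
      · rintro ⟨⟨z', hz'S, rfl⟩, hadj⟩
        exact ⟨z', ⟨hz'S, hadj⟩, rfl⟩
      · rintro ⟨z', ⟨hz'S, hadj⟩, rfl⟩
        exact ⟨⟨z', hz'S, rfl⟩, hadj⟩
    have := hS y hyS
    rw [himg, Set.ncard_image_of_injective _ Subtype.val_injective]
    exact this
end
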